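/- Let T be a tree with a vertex w of degree at least 3 that is adjacent to two distinct pendant paths each on s vertices, where s ≥ 1, and let T' be the tree obtained from T by removing all s vertices of one of these pendant paths. Then for all k ≥ 2: (i) if k ≥ 2s, then mdi_k(T) ≥ mdi_k(T') + s; (ii) if k = 2s − 1 or k = 2s − 2, then mdi_k(T) ≥ mdi_k(T') + s − 1. -/

import Mathlib

/-- `J` is a distance-`k` independent set in `G`: any two distinct vertices of `J`
are at graph distance at least `k + 1`. -/
def DkIndep {V : Type*} (G : SimpleGraph V) (k : ℕ) (J : Set V) : Prop :=
  ∀ ⦃u⦄, u ∈ J → ∀ ⦃v⦄, v ∈ J → u ≠ v → k + 1 ≤ G.dist u v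

/-- `J` is a maximal distance-`k` independent set (`k`-MDIS) of `G`. -/
def MaxDkIndep {V : Type*} (G : SimpleGraph V) (k : ℕ) (J : Set V) : Prop :=
  DkIndep G k J ∧ ∀ J', DkIndep G k J' → J ⊆ J' → J' = J

/-- `mdi G k` is the number of maximal distance-`k` independent sets of `G`. -/
noncomputable def mdi {V : Type*} (G : SimpleGraph V) (k : ℕ) : ℕ :=
  {J : Set V | MaxDkIndep G k J}.ncard

/-- `f_k(n)` from the paper. -/
def fk (k n : ℕ) : ℕ :=
  if n ≤ k + 1 then n else n - (n - k % 2) / (k / 2 + 1) + 1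

/-- closed ball `N_k[x]`. -/
def ball {V : Type*} (G : SimpleGraph V) (k : ℕ) (x : V) : Set V :=
  {v | G.dist x v ≤ k}

/-- a leaf is a vertex of degree 1. -/
def IsLeaf {V : Type*} (G : SimpleGraph V) (v : V) : Prop :=
  (G.neighborSet v).ncard = 1

/-- eccentricity of a vertex. -/
noncomputable def ecc {V : Type*} [Fintype V] (G : SimpleGraph V) (v : V) : ℕ :=
  Finset.univ.sup (G.dist v)

/-- diameter of a finite graph. -/
noncomputable def gdiam {V : Type*} [Fintype V] (G : SimpleGraph V) : ℕ :=
  Finset.univ.sup (ecc G)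

/-- a central vertex is one of minimum eccentricity. -/
def IsCentral {V : Type*} [Fintype V] (G : SimpleGraph V) (v : V) : Prop :=
  ∀ u, ecc G v ≤ ecc G u

/-- a `k`-twin: some other vertex has the same closed `k`-ball. -/
def KTwin {V : Type*} (G : SimpleGraph V) (k : ℕ) (u : V) : Prop :=
  ∃ v, v ≠ u ∧ ball G k u = ball G k v

/-- a diametral leaf: a leaf whose eccentricity equals the diameter. -/
def IsDiametralLeaf {V : Type*} [Fintype V] (G : SimpleGraph V) (u : V) : Prop :=
  IsLeaf G u ∧ ecc G u = gdiam G

/-- a `k`-special pair. -/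
def KSpecial {V : Type*} [Fintype V] (G : SimpleGraph V) (k : ℕ) (x y : V) : Prop :=
  IsDiametralLeaf G x ∧ IsDiametralLeaf G y ∧ KTwin G k x ∧ KTwin G k y ∧
    ball G k x ≠ ball G k y

/-- `mdi*_k(G, ℓ)`. -/
noncomputable def mdiStar {V : Type*} (G : SimpleGraph V) (k : ℕ) (ℓ : V) : ℕ :=
  {J : Set V | MaxDkIndep G k J ∧ ℓ ∈ J ∧ ∃ w ∉ J, ball G k w ∩ J = {ℓ}}.ncard

/-- The spider tree `S_{p,m}`: a center (`none`) together with `p` legs of `m` vertices. -/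
def spider (p m : ℕ) : SimpleGraph (Option (Fin p × Fin m)) :=
  SimpleGraph.fromRel fun a b =>
    match a, b with
    | none, some (_, j) => (j : ℕ) = 0
    | some (i, j), some (i', j') => i = i' ∧ (j : ℕ) + 1 = (j' : ℕ)
    | _, _ => False

/-- `S'_{p,m}`: the spider `S_{p,m}` with one leaf at distance `m` from the center removed. -/
def spider' (p m : ℕ) (hp : 0 < p) (hm : 0 < m) :=
  (spider p m).induce
    {v | v ≠ some (⟨0, hp⟩, ⟨m - 1, Nat.sub_lt hm Nat.one_pos⟩)}

/-- The double spider `B_{p₁,p₂,s}`: two adjacent centers (`Sum.inl false`, `Sum.inl true`),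
with `p₁` legs of `s` vertices on the first and `p₂` legs of `s` vertices on the second. -/
def btree (p₁ p₂ s : ℕ) : SimpleGraph (Bool ⊕ ((Fin p₁ ⊕ Fin p₂) × Fin s)) :=
  SimpleGraph.fromRel fun a b =>
    match a, b with
    | Sum.inl x, Sum.inl y => x ≠ y
    | Sum.inl false, Sum.inr (Sum.inl _, j) => (j : ℕ) = 0
    | Sum.inl true, Sum.inr (Sum.inr _, j) => (j : ℕ) = 0
    | Sum.inr (c, j), Sum.inr (c', j') => c = c' ∧ (j : ℕ) + 1 = (j' : ℕ)
    | _, _ => False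

/-- `G` contains a subgraph isomorphic to `H`. -/
def ContainsSub {V W : Type*} (G : SimpleGraph V) (H : SimpleGraph W) : Prop :=
  ∃ f : W → V, Function.Injective f ∧ ∀ a b, H.Adj a b → G.Adj (f a) (f b)

/-- A pendant path on `s` vertices `P 0, …, P (s-1)` attached to `w`:
`P 0` is a leaf, consecutive vertices are adjacent, interior vertices have degree 2,
and `P (s-1)` is adjacent to `w`. -/
def IsPendantPath {V : Type*} (T : SimpleGraph V) (s : ℕ) (P : ℕ → V) (w : V) : Prop :=
  Set.InjOn P (Set.Iio s) ∧ (∀ i < s, P i ≠ w) ∧ IsLeaf T (P 0) ∧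
    (∀ i, i + 1 < s → T.Adj (P i) (P (i + 1))) ∧
    (∀ i, 0 < i → i < s → (T.neighborSet (P i)).ncard = 2) ∧
    T.Adj (P (s - 1)) w

/-- Isomorphism of simple graphs on `Fin n` as a setoid. -/
def graphSetoid (n : ℕ) : Setoid (SimpleGraph (Fin n)) where
  r G H := Nonempty (G ≃g H)
  iseqv := ⟨fun _ => ⟨SimpleGraph.Iso.refl⟩, fun ⟨e⟩ => ⟨e.symm⟩, fun ⟨e⟩ ⟨f⟩ => ⟨e.trans f⟩⟩

/-- The number of isomorphism classes of graphs in a set of graphs on `Fin n`. -/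
noncomputable def numIsoClasses {n : ℕ} (S : Set (SimpleGraph (Fin n))) : ℕ :=
  ((fun G => Quotient.mk (graphSetoid n) G) '' S).ncard


/-!
Let `S` be the set of vertices off `Q`. Since `Q` hangs off `w`, every `u ∈ S` satisfies
`dist (Q j) u = dist w u + (s - j)`: the upper bound goes through `w`, the lower bound comes from
a potential that is `j - s` on `Q j` and `dist w ·` elsewhere and changes by at most one along
edges. Hence `T' = T[S]` sits isometrically in `T`, and each maximal set `J'` of `T'` gives,
injectively, a maximal set of `T` meeting `Q` at most in `Q 0`. If `k ≥ 2s`, `J'` itself works: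
whatever dominates the leaf of `P` also dominates all of `Q`. If `s ≤ k`, take `J'` when some
vertex of `J'` is within `k - s` of `w`, and `J' ∪ {Q 0}` otherwise. The vertices of `Q` are
pairwise within distance `k`, so maximal sets of `T` through distinct `Q j` are distinct, and
they supply the `s` (respectively `s - 1`, for `j ≥ 1`) further maximal sets.
-/

open SimpleGraph

section Metric

variable {V : Type*} {G : SimpleGraph V}

theorem SimpleGraph.Connected.abs_sub_le_dist (hG : G.Connected) {f : V → ℤ}
    (hf : ∀ u v, G.Adj u v → |f u - f v| ≤ 1) (u v : V) : |f u - f v| ≤ G.dist u v := by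
  obtain ⟨p, hp⟩ := hG.exists_walk_length_eq_dist u v
  rw [← hp]
  clear hp
  induction p with
  | nil => simp
  | @cons a b c hab p ih =>
    rw [Walk.length_cons, Nat.cast_succ]
    linarith [abs_sub_le (f a) (f b) (f c), hf a b hab]

theorem SimpleGraph.Connected.dist_induce (hG : G.Connected) {S : Set V}
    (hS : ∀ x ∉ S, ∀ u ∈ S, ∀ v ∈ S, G.dist u v < G.dist u x + G.dist x v) (a b : S) :
    (G.induce S).dist a b = G.dist a b := by
  classical
  obtain ⟨p, hp⟩ := hG.exists_walk_length_eq_dist a b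
  have hsupp : ∀ x ∈ p.support, x ∈ S := by
    intro x hx
    by_contra hxS
    have hsplit := congrArg Walk.length (p.take_spec hx)
    rw [Walk.length_append] at hsplit
    have := dist_le (p.takeUntil x hx)
    have := dist_le (p.dropUntil x hx)
    have := hS x hxS a a.2 b b.2
    omega
  refine le_antisymm ?_ ?_
  · calc (G.induce S).dist a b ≤ (p.induce S hsupp).length := dist_le _
      _ = G.dist a b := by
        rw [← Walk.length_map (Embedding.induce S).toHom, Walk.map_induce]
        exact hp
  obtain ⟨q, hq⟩ := Reachable.exists_walk_length_eq_dist ⟨p.induce S hsupp⟩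
  calc G.dist a b ≤ (q.map (Embedding.induce S).toHom).length := dist_le _
    _ = (G.induce S).dist a b := by rw [Walk.length_map, hq]

end Metric

section MaxDkIndep

variable {V W : Type*} {G : SimpleGraph V} {k : ℕ} {J : Set V}

theorem DkIndep.insert {x : V} (hJ : DkIndep G k J) (hx : ∀ u ∈ J, u ≠ x → k < G.dist x u) :
    DkIndep G k (insert x J) := by
  rintro a (rfl | ha) b (rfl | hb) hab
  · exact absurd rfl hab
  · exact hx b hb (Ne.symm hab)
  · rw [dist_comm]
    exact hx a ha hab
  · exact hJ ha hb hab

theorem maxDkIndep_iff :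
    MaxDkIndep G k J ↔ DkIndep G k J ∧ ∀ v, ∃ u ∈ J, G.dist u v ≤ k := by
  refine ⟨fun hJ => ⟨hJ.1, fun v => ?_⟩, fun ⟨hJ, hdom⟩ => ⟨hJ, fun J' hJ' hsub => ?_⟩⟩
  · by_contra! hfar
    have hv : v ∈ J := by
      rw [← hJ.2 _ (hJ.1.insert fun u hu _ => dist_comm (G := G) ▸ hfar u hu)
        (Set.subset_insert v J)]
      exact Set.mem_insert v J
    exact (hfar v hv).not_ge (by simp)
  · refine Set.Subset.antisymm (fun v hv => ?_) hsub
    obtain ⟨u, hu, huv⟩ := hdom v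
    by_contra hvJ
    have := hJ' (hsub hu) hv (by rintro rfl; exact hvJ hu)
    omega

theorem exists_maxDkIndep_mem [Finite V] (G : SimpleGraph V) (k : ℕ) (v : V) :
    ∃ J, MaxDkIndep G k J ∧ v ∈ J := by
  obtain ⟨J, hvJ, hJ⟩ := Finite.exists_le_maximal (p := DkIndep G k) (a := {v})
    (fun a ha b hb hab => absurd (ha.trans hb.symm) hab)
  exact ⟨J, ⟨hJ.1, fun J' hJ' hsub => (hJ.2 hJ' hsub).antisymm hsub⟩, hvJ rfl⟩

theorem mdi_add_ncard_le [Finite V] [Finite W] {G' : SimpleGraph W} (φ : Set W → Set V)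
    (hφ : ∀ J, MaxDkIndep G' k J → MaxDkIndep G k (φ J))
    (hφinj : Set.InjOn φ {J | MaxDkIndep G' k J}) {A : Set V}
    (hA : ∀ a ∈ A, ∀ b ∈ A, G.dist a b ≤ k)
    (hφA : ∀ J, MaxDkIndep G' k J → Disjoint (φ J) A) :
    mdi G' k + A.ncard ≤ mdi G k := by
  choose E hE hvE using exists_maxDkIndep_mem G k
  have hEinj : Set.InjOn E A := fun a ha b hb hab => by
    by_contra hne
    have := (hE a).1 (hvE a) (hab ▸ hvE b) hne
    have := hA a ha b hb
    omega
  have hdisj : Disjoint (φ '' {J | MaxDkIndep G' k J}) (E '' A) := by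
    refine Set.disjoint_left.2 ?_
    rintro _ ⟨J, hJ, rfl⟩ ⟨a, ha, hEa⟩
    exact Set.disjoint_left.1 (hφA J hJ) (hEa ▸ hvE a) ha
  calc mdi G' k + A.ncard = (φ '' {J | MaxDkIndep G' k J} ∪ E '' A).ncard := by
        rw [Set.ncard_union_eq hdisj, hφinj.ncard_image, hEinj.ncard_image, mdi]
    _ ≤ mdi G k :=
        Set.ncard_le_ncard (Set.union_subset (Set.image_subset_iff.2 hφ)
          (Set.image_subset_iff.2 fun a _ => hE a))

theorem MaxDkIndep.exists_image_val_dist_le {S : Set V}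
    (hS : ∀ a b : S, (G.induce S).dist a b = G.dist a b) {J' : Set S}
    (hJ' : MaxDkIndep (G.induce S) k J') {v : V} (hv : v ∈ S) :
    ∃ u ∈ Subtype.val '' J', G.dist u v ≤ k := by
  obtain ⟨u, hu, huv⟩ := (maxDkIndep_iff.1 hJ').2 ⟨v, hv⟩
  exact ⟨u, ⟨u, hu, rfl⟩, hS u ⟨v, hv⟩ ▸ huv⟩

theorem DkIndep.image_val {S : Set V} (hS : ∀ a b : S, (G.induce S).dist a b = G.dist a b)
    {J' : Set S} (hJ' : DkIndep (G.induce S) k J') : DkIndep G k (Subtype.val '' J') := by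
  rintro _ ⟨a, ha, rfl⟩ _ ⟨b, hb, rfl⟩ hab
  rw [← hS]
  exact hJ' ha hb (ne_of_apply_ne _ hab)

theorem MaxDkIndep.maxDkIndep_of_image_val_subset {S : Set V}
    (hS : ∀ a b : S, (G.induce S).dist a b = G.dist a b) {J' : Set S}
    (hJ' : MaxDkIndep (G.induce S) k J') (hsub : Subtype.val '' J' ⊆ J) (hJ : DkIndep G k J)
    (hdom : ∀ v ∉ S, ∃ u ∈ J, G.dist u v ≤ k) : MaxDkIndep G k J := by
  refine maxDkIndep_iff.2 ⟨hJ, fun v => ?_⟩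
  by_cases hv : v ∈ S
  · obtain ⟨u, hu, huv⟩ := hJ'.exists_image_val_dist_le hS hv
    exact ⟨u, hsub hu, huv⟩
  · exact hdom v hv

end MaxDkIndep

section PendantPath

variable {V : Type*} {G : SimpleGraph V} {s : ℕ} {R : ℕ → V} {w : V} {i j : ℕ}

def extendPath (s : ℕ) (R : ℕ → V) (w : V) (j : ℕ) : V :=
  if j < s then R j else w

theorem extendPath_of_lt (hj : j < s) : extendPath s R w j = R j :=
  if_pos hj

theorem extendPath_self : extendPath s R w s = w :=
  if_neg (lt_irrefl s)

/-- Along a pendant path this changes by at most one across each edge, so it bounds distances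
from below. -/
noncomputable def pathPotential (G : SimpleGraph V) (s : ℕ) (R : ℕ → V) (w x : V) : ℤ :=
  open Classical in
  if h : ∃ j < s, R j = x then (h.choose : ℤ) - s else G.dist w x

theorem pathPotential_of_forall_ne {x : V} (hx : ∀ j < s, x ≠ R j) :
    pathPotential G s R w x = G.dist w x :=
  dif_neg fun ⟨j, hj, he⟩ => hx j hj he.symm

namespace IsPendantPath

theorem adj_extendPath_succ (h : IsPendantPath G s R w) (hi : i < s) :
    G.Adj (R i) (extendPath s R w (i + 1)) := by
  obtain ⟨-, -, -, hchain, -, hlast⟩ := h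
  unfold extendPath
  split_ifs with hi'
  · exact hchain i hi'
  · obtain rfl : i = s - 1 := by omega
    exact hlast

theorem eq_of_adj (h : IsPendantPath G s R w) (hi : i < s) {x : V} (hx : G.Adj (R i) x) :
    x = extendPath s R w (i + 1) ∨ 0 < i ∧ x = R (i - 1) := by
  have hnext : extendPath s R w (i + 1) ∈ G.neighborSet (R i) := h.adj_extendPath_succ hi
  have hx : x ∈ G.neighborSet (R i) := hx
  obtain ⟨hinj, hRw, hleaf, hchain, hdeg, -⟩ := h
  rcases Nat.eq_zero_or_pos i with rfl | hi0
  · obtain ⟨a, ha⟩ := Set.ncard_eq_one.1 hleaf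
    rw [ha] at hnext hx
    exact Or.inl (hx.trans hnext.symm)
  · have hprev : R (i - 1) ∈ G.neighborSet (R i) := by
      have := hchain (i - 1) (by omega)
      rw [Nat.sub_add_cancel hi0] at this
      exact this.symm
    have hne : R (i - 1) ≠ extendPath s R w (i + 1) := by
      unfold extendPath
      split_ifs with hi'
      · exact fun he => by have := hinj (show i - 1 < s by omega) hi' he; omega
      · exact hRw _ (by omega)
    have hN : G.neighborSet (R i) = {R (i - 1), extendPath s R w (i + 1)} :=
      (Set.eq_of_subset_of_ncard_le (Set.insert_subset hprev (Set.singleton_subset_iff.2 hnext))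
        (by rw [hdeg i hi0 hi, Set.ncard_pair hne])
        (Set.finite_of_ncard_ne_zero (by rw [hdeg i hi0 hi]; omega))).symm
    rw [hN] at hx
    rcases hx with rfl | rfl
    · exact Or.inr ⟨hi0, rfl⟩
    · exact Or.inl rfl

theorem pathPotential_extendPath (h : IsPendantPath G s R w) (hj : j ≤ s) :
    pathPotential G s R w (extendPath s R w j) = j - s := by
  rcases hj.lt_or_eq with hj | rfl
  · have hex : ∃ i < s, R i = extendPath s R w j := ⟨j, hj, (extendPath_of_lt hj).symm⟩
    rw [pathPotential, dif_pos hex,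
      h.1 hex.choose_spec.1 hj (hex.choose_spec.2.trans (extendPath_of_lt hj))]
  · rw [extendPath_self, pathPotential_of_forall_ne fun i hi => (h.2.1 i hi).symm, dist_self]
    simp

theorem pathPotential_of_lt (h : IsPendantPath G s R w) (hi : i < s) :
    pathPotential G s R w (R i) = i - s := by
  simpa only [extendPath_of_lt hi] using h.pathPotential_extendPath hi.le

theorem abs_pathPotential_sub_le_one (h : IsPendantPath G s R w) {u v : V} (huv : G.Adj u v) :
    |pathPotential G s R w u - pathPotential G s R w v| ≤ 1 := by
  have hpath : ∀ {u v}, G.Adj u v → (∃ i < s, u = R i) →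
      |pathPotential G s R w u - pathPotential G s R w v| ≤ 1 := by
    rintro u v huv ⟨i, hi, rfl⟩
    rw [h.pathPotential_of_lt hi, abs_le]
    rcases h.eq_of_adj hi huv with rfl | ⟨hi0, rfl⟩
    · rw [h.pathPotential_extendPath hi]
      omega
    · rw [h.pathPotential_of_lt (by omega)]
      omega
  by_cases hu : ∃ i < s, u = R i
  · exact hpath huv hu
  by_cases hv : ∃ i < s, v = R i
  · exact abs_sub_comm (pathPotential G s R w u) _ ▸ hpath huv.symm hv
  push Not at hu hv
  rw [pathPotential_of_forall_ne hu, pathPotential_of_forall_ne hv, abs_le]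
  rcases huv.diff_dist_adj (u := w) with h | h | h <;> omega

theorem dist_extendPath (h : IsPendantPath G s R w) (hG : G.Connected) (hij : i ≤ j)
    (hj : j ≤ s) : G.dist (extendPath s R w i) (extendPath s R w j) = j - i := by
  refine le_antisymm ?_ ?_
  · induction j, hij using Nat.le_induction with
    | base => simp
    | succ j hij ih =>
      have hstep : G.dist (extendPath s R w j) (extendPath s R w (j + 1)) = 1 := by
        rw [extendPath_of_lt (by omega : j < s), dist_eq_one_iff_adj]
        exact h.adj_extendPath_succ (by omega)
      have := ih (by omega)
      have := hG.dist_triangle (u := extendPath s R w i) (v := extendPath s R w j)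
        (w := extendPath s R w (j + 1))
      omega
  · have := hG.abs_sub_le_dist (fun _ _ => h.abs_pathPotential_sub_le_one)
      (extendPath s R w i) (extendPath s R w j)
    rw [h.pathPotential_extendPath (hij.trans hj), h.pathPotential_extendPath hj, abs_le] at this
    omega

theorem dist_apply_eq_sub (h : IsPendantPath G s R w) (hG : G.Connected) (hi : i < s) :
    G.dist (R i) w = s - i := by
  simpa only [extendPath_of_lt hi, extendPath_self] using h.dist_extendPath hG hi.le le_rfl

theorem dist_lt (h : IsPendantPath G s R w) (hG : G.Connected) (hi : i < s) (hj : j < s) :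
    G.dist (R i) (R j) < s := by
  wlog hij : i ≤ j generalizing i j
  · exact dist_comm (G := G) ▸ this hj hi (by omega)
  have := h.dist_extendPath hG hij hj.le
  rw [extendPath_of_lt hi, extendPath_of_lt hj] at this
  omega

theorem dist_apply_of_forall_ne (h : IsPendantPath G s R w) (hG : G.Connected) (hi : i < s)
    {v : V} (hv : ∀ j < s, v ≠ R j) : G.dist (R i) v = G.dist w v + (s - i) := by
  refine le_antisymm ?_ ?_
  · have := hG.dist_triangle (u := R i) (v := w) (w := v)
    rw [h.dist_apply_eq_sub hG hi] at this
    omega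
  · have := hG.abs_sub_le_dist (fun _ _ => h.abs_pathPotential_sub_le_one) (R i) v
    rw [h.pathPotential_of_lt hi, pathPotential_of_forall_ne hv, abs_le] at this
    omega

theorem dist_induce_eq (h : IsPendantPath G s R w) (hG : G.Connected)
    (a b : {x | ∀ j < s, x ≠ R j}) :
    (G.induce {x | ∀ j < s, x ≠ R j}).dist a b = G.dist a b := by
  refine hG.dist_induce (fun x hx u hu v hv => ?_) a b
  obtain ⟨j, hj, rfl⟩ : ∃ j < s, x = R j := by simpa using hx
  have hu : G.dist u (R j) = G.dist w u + (s - j) :=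
    dist_comm.trans (h.dist_apply_of_forall_ne hG hj hu)
  have hv := h.dist_apply_of_forall_ne hG hj hv
  have := hG.dist_triangle (u := u) (v := w) (w := v)
  have := dist_comm (G := G) (u := u) (v := w)
  omega

theorem dist_le_of_dist_leaf_le {P Q : ℕ → V} (hP : IsPendantPath G s P w)
    (hQ : IsPendantPath G s Q w) (hG : G.Connected) {k : ℕ} (hk : 2 * s ≤ k) {u : V}
    (hu : ∀ j < s, u ≠ Q j) (hPu : G.dist u (P 0) ≤ k) (hj : j < s) : G.dist u (Q j) ≤ k := by
  rw [dist_comm, hQ.dist_apply_of_forall_ne hG hj hu]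
  by_cases huP : ∃ i < s, u = P i
  · obtain ⟨i, hi, rfl⟩ := huP
    rw [dist_comm, hP.dist_apply_eq_sub hG hi]
    omega
  · push Not at huP
    rw [dist_comm, hP.dist_apply_of_forall_ne hG (by omega) huP] at hPu
    omega

end IsPendantPath

end PendantPath

section RemovePendantPath

variable {V : Type*} {G : SimpleGraph V} {s k : ℕ} {Q : ℕ → V} {w : V}

theorem mdi_induce_add_le_of_two_mul_le [Finite V] {P : ℕ → V} (hG : G.Connected) (hs : 0 < s)
    (hP : IsPendantPath G s P w) (hQ : IsPendantPath G s Q w)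
    (hPQ : ∀ i < s, ∀ j < s, P i ≠ Q j) (hk : 2 * s ≤ k) :
    mdi (G.induce {x | ∀ j < s, x ≠ Q j}) k + s ≤ mdi G k := by
  have hS := hQ.dist_induce_eq hG
  have hmax : ∀ J, MaxDkIndep (G.induce {x | ∀ j < s, x ≠ Q j}) k J →
      MaxDkIndep G k (Subtype.val '' J) := by
    intro J hJ
    refine hJ.maxDkIndep_of_image_val_subset hS subset_rfl (hJ.1.image_val hS) fun v hv => ?_
    obtain ⟨j, hj, rfl⟩ : ∃ j < s, v = Q j := by simpa using hv
    obtain ⟨_, ⟨u, hu, rfl⟩, hPu⟩ := hJ.exists_image_val_dist_le hS (v := P 0) (hPQ 0 hs)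
    exact ⟨u, ⟨u, hu, rfl⟩, hP.dist_le_of_dist_leaf_le hQ hG hk u.2 hPu hj⟩
  have hQk : ∀ a ∈ Q '' Set.Iio s, ∀ b ∈ Q '' Set.Iio s, G.dist a b ≤ k := by
    rintro _ ⟨i, hi, rfl⟩ _ ⟨j, hj, rfl⟩
    have := hQ.dist_lt hG hi hj
    omega
  have hmaxQ : ∀ J : Set {x | ∀ j < s, x ≠ Q j}, Disjoint (Subtype.val '' J) (Q '' Set.Iio s) :=
    fun J => Set.disjoint_left.2 fun _ ⟨u, _, hu⟩ ⟨j, hj, hju⟩ => u.2 j hj (hu.trans hju.symm)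
  have := mdi_add_ncard_le _ hmax (Set.image_injective.2 Subtype.val_injective).injOn hQk
    fun J _ => hmaxQ J
  rwa [hQ.1.ncard_image, Set.ncard_Iio_nat] at this

/-- Adds the leaf `Q 0` exactly when no vertex of `J` is close enough to `w` to dominate all
of `Q`. -/
noncomputable def extendAtLeaf (G : SimpleGraph V) (s k : ℕ) (Q : ℕ → V) (w : V)
    (J : Set {x | ∀ j < s, x ≠ Q j}) : Set V :=
  open Classical in
  if ∃ u ∈ J, G.dist w u + s ≤ k then Subtype.val '' J else insert (Q 0) (Subtype.val '' J)

theorem extendAtLeaf_subset (J : Set {x | ∀ j < s, x ≠ Q j}) :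
    extendAtLeaf G s k Q w J ⊆ insert (Q 0) (Subtype.val '' J) := by
  unfold extendAtLeaf
  split_ifs
  exacts [Set.subset_insert _ _, subset_rfl]

theorem leftInverse_preimage_val_extendAtLeaf (hs : 0 < s) :
    Function.LeftInverse (Subtype.val ⁻¹' ·) (extendAtLeaf G s k Q w) := by
  intro J
  unfold extendAtLeaf
  split_ifs
  · exact Set.preimage_image_eq J Subtype.val_injective
  · ext u
    simp only [Set.mem_preimage, Set.mem_insert_iff, Subtype.val_injective.mem_set_image,
      or_iff_right (u.2 0 hs)]

theorem MaxDkIndep.maxDkIndep_extendAtLeaf (hG : G.Connected) (hs : 0 < s)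
    (hQ : IsPendantPath G s Q w) (hk : s ≤ k) {J : Set {x | ∀ j < s, x ≠ Q j}}
    (hJ : MaxDkIndep (G.induce {x | ∀ j < s, x ≠ Q j}) k J) :
    MaxDkIndep G k (extendAtLeaf G s k Q w J) := by
  have hS := hQ.dist_induce_eq hG
  unfold extendAtLeaf
  split_ifs with hnear
  · obtain ⟨u, hu, hwu⟩ := hnear
    refine hJ.maxDkIndep_of_image_val_subset hS subset_rfl (hJ.1.image_val hS) fun v hv => ?_
    obtain ⟨j, hj, rfl⟩ : ∃ j < s, v = Q j := by simpa using hv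
    refine ⟨u, ⟨u, hu, rfl⟩, ?_⟩
    rw [SimpleGraph.dist_comm, hQ.dist_apply_of_forall_ne hG hj u.2]
    omega
  · push Not at hnear
    refine hJ.maxDkIndep_of_image_val_subset hS (Set.subset_insert _ _)
      ((hJ.1.image_val hS).insert ?_) fun v hv => ?_
    · rintro _ ⟨u, hu, rfl⟩ -
      rw [hQ.dist_apply_of_forall_ne hG hs u.2]
      have := hnear u hu
      omega
    · obtain ⟨j, hj, rfl⟩ : ∃ j < s, v = Q j := by simpa using hv
      have := hQ.dist_lt hG hs hj
      exact ⟨Q 0, Set.mem_insert _ _, by omega⟩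

theorem mdi_induce_add_pred_le [Finite V] (hG : G.Connected) (hs : 0 < s)
    (hQ : IsPendantPath G s Q w) (hk : s ≤ k) :
    mdi (G.induce {x | ∀ j < s, x ≠ Q j}) k + (s - 1) ≤ mdi G k := by
  have hdisj : ∀ J, Disjoint (extendAtLeaf G s k Q w J) (Q '' Set.Ioo 0 s) := by
    refine fun J => Set.disjoint_left.2 fun x hx ⟨j, ⟨hj0, hj⟩, hjx⟩ => ?_
    subst hjx
    rcases extendAtLeaf_subset J hx with h0 | ⟨u, -, hu⟩
    · exact hj0.ne (hQ.1 hs hj h0.symm)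
    · exact u.2 j hj hu
  have hQk : ∀ a ∈ Q '' Set.Ioo 0 s, ∀ b ∈ Q '' Set.Ioo 0 s, G.dist a b ≤ k := by
    rintro _ ⟨i, hi, rfl⟩ _ ⟨j, hj, rfl⟩
    have := hQ.dist_lt hG hi.2 hj.2
    omega
  have := mdi_add_ncard_le _ (fun _ hJ => hJ.maxDkIndep_extendAtLeaf hG hs hQ hk)
    (leftInverse_preimage_val_extendAtLeaf hs).injective.injOn hQk fun J _ => hdisj J
  rwa [(hQ.1.mono Set.Ioo_subset_Iio_self).ncard_image, Set.ncard_Ioo_nat, Nat.sub_zero] at this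

end RemovePendantPath

theorem stmt_8_general {V : Type} [Fintype V] (T : SimpleGraph V) (hT : T.IsTree)
    (s : ℕ) (hs : 1 ≤ s) (w : V)
    (P Q : ℕ → V) (hP : IsPendantPath T s P w) (hQ : IsPendantPath T s Q w)
    (hdisj : ∀ i < s, ∀ j < s, P i ≠ Q j) (k : ℕ) (hk : 2 ≤ k) :
    (2 * s ≤ k → mdi (T.induce {x | ∀ j < s, x ≠ Q j}) k + s ≤ mdi T k) ∧
    ((k = 2 * s - 1 ∨ k = 2 * s - 2) →
      mdi (T.induce {x | ∀ j < s, x ≠ Q j}) k + (s - 1) ≤ mdi T k) :=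
  ⟨fun hsk => mdi_induce_add_le_of_two_mul_le hT.connected hs hP hQ hdisj hsk,
    fun hsk => mdi_induce_add_pred_le hT.connected hs hQ (by omega)⟩

/-- Let `w` be a vertex of degree ≥ 3 in a tree `T`, adjacent to two
distinct pendant paths `P`, `Q`, each on `s ≥ 1` vertices, and let `T'` be obtained
from `T` by deleting the `s` vertices of `Q`. Then for `k ≥ 2`:
(i) if `k ≥ 2s` then `mdi_k(T) ≥ mdi_k(T') + s`;
(ii) if `k = 2s − 1` or `k = 2s − 2` then `mdi_k(T) ≥ mdi_k(T') + s − 1`. -/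
theorem stmt_8 {V : Type} [Fintype V] (T : SimpleGraph V) (hT : T.IsTree)
    (s : ℕ) (hs : 1 ≤ s) (w : V) (hw : 3 ≤ (T.neighborSet w).ncard)
    (P Q : ℕ → V) (hP : IsPendantPath T s P w) (hQ : IsPendantPath T s Q w)
    (hdisj : ∀ i < s, ∀ j < s, P i ≠ Q j) (k : ℕ) (hk : 2 ≤ k) :
    (2 * s ≤ k → mdi (T.induce {x | ∀ j < s, x ≠ Q j}) k + s ≤ mdi T k) ∧
    ((k = 2 * s - 1 ∨ k = 2 * s - 2) →
      mdi (T.induce {x | ∀ j < s, x ≠ Q j}) k + (s - 1) ≤ mdi T k) :=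
  stmt_8_general T hT s hs w P Q hP hQ hdisj k hk
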